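/- Assume that for every (β, s) ∈ Δ(Ω) × S the receiver's best response â(β, s) = argmax_{a∈A} ∑_ω β(ω) u(s, a, ω) is unique, and set v̂(β, s) = ∑_ω β(ω) v(s, â(β, s), ω). Let E = {(μ, z) ∈ Δ(Ω) × ℝ : z is the sender's expected payoff in some Perfect Bayesian Equilibrium at prior μ}. Then for every μ0 ∈ Δ(Ω), sup{z : (μ0, z) ∈ convexHull(E)} = sup{z : (μ0, z) ∈ convexHull(⋃_{s∈S} v̂_s^P)}, where both suprema are taken in the extended reals. That is, the sender's pre-persuasion value equals the concave envelope of the pooling payoff graphs. -/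

import Mathlib

open scoped BigOperators

noncomputable section

/-- `(π, β, α)` is a Perfect Bayesian Equilibrium of the finite signaling game at
prior `μ`. -/
def IsPBE {Ω S A : Type*} [Fintype Ω] [Fintype S] [Fintype A]
    (v u : S → A → Ω → ℝ) (μ : Ω → ℝ)
    (π : Ω → S → ℝ) (β : S → Ω → ℝ) (α : S → A) : Prop :=
  (∀ ω, π ω ∈ stdSimplex ℝ S) ∧ (∀ s, β s ∈ stdSimplex ℝ Ω) ∧
  (∀ s, 0 < (∑ ω, μ ω * π ω s) →
    ∀ ω, β s ω = μ ω * π ω s / ∑ ω', μ ω' * π ω' s) ∧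
  (∀ s a, (∑ ω, β s ω * u s a ω) ≤ (∑ ω, β s ω * u s (α s) ω)) ∧
  (∀ ω, 0 < μ ω → ∀ s, 0 < π ω s → ∀ s', v s' (α s') ω ≤ v s (α s) ω)

/-- The set of pairs (prior, sender expected payoff) arising in some PBE. -/
def PBEGraph {Ω S A : Type*} [Fintype Ω] [Fintype S] [Fintype A]
    (v u : S → A → Ω → ℝ) : Set ((Ω → ℝ) × ℝ) :=
  {q | q.1 ∈ stdSimplex ℝ Ω ∧
    ∃ (π : Ω → S → ℝ) (β : S → Ω → ℝ) (α : S → A),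
      IsPBE v u q.1 π β α ∧ q.2 = ∑ ω, q.1 ω * ∑ s, π ω s * v s (α s) ω}

/-- A pooling equilibrium exists at `(μb, sb)`. -/
def PoolingAt {Ω S A : Type*} [Fintype Ω] [Fintype S] [Fintype A]
    (v u : S → A → Ω → ℝ) (μb : Ω → ℝ) (sb : S) : Prop :=
  ∃ (β : S → Ω → ℝ) (α : S → A),
    (∀ t, β t ∈ stdSimplex ℝ Ω) ∧ β sb = μb ∧
    (∀ t a, (∑ ω, β t ω * u t a ω) ≤ (∑ ω, β t ω * u t (α t) ω)) ∧
    (∀ ω, 0 < μb ω → ∀ s', v s' (α s') ω ≤ v sb (α sb) ω)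

/-- The pooling payoff graph of action `s`, with interim payoffs computed using the
receiver's (unique) best response `arg`. -/
def poolingGraph {Ω S A : Type*} [Fintype Ω] [Fintype S] [Fintype A]
    (v u : S → A → Ω → ℝ) (arg : (Ω → ℝ) → S → A) (s : S) :
    Set ((Ω → ℝ) × ℝ) :=
  {q | q.1 ∈ stdSimplex ℝ Ω ∧ PoolingAt v u q.1 s ∧
    q.2 = ∑ ω, q.1 ω * v s (arg q.1 s) ω}

/-!
Bayes plausibility splits a PBE at prior `μ` into its posteriors `β s`, weighted by the
signal probabilities `p s = ∑ ω, μ ω * π ω s`, and the sender's payoff splits accordingly into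
the interim payoffs. Each posterior that occurs with positive probability is a pooling belief
for its signal: the same beliefs and responses form a pooling equilibrium there, because every
state in its support sends that signal in the PBE, and uniqueness of best responses identifies
`α s` with `arg (β s) s`. Conversely a pooling equilibrium is a PBE in which every type sends
the same signal. So the PBE graph and the union of the pooling graphs lie in each other's
convex hulls, and the two hulls, hence the two suprema, coincide.
-/

open Finset

theorem Finset.sum_smul_mem_convexHull_of_pos {ι R E : Type*} [Field R] [LinearOrder R]
    [IsStrictOrderedRing R] [AddCommGroup E] [Module R E] {s : Set E} {t : Finset ι}
    {w : ι → R} {z : ι → E} (h₀ : ∀ i ∈ t, 0 ≤ w i) (h₁ : ∑ i ∈ t, w i = 1)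
    (hz : ∀ i ∈ t, 0 < w i → z i ∈ s) : ∑ i ∈ t, w i • z i ∈ convexHull R s := by
  have hpos : ∀ i ∈ t, w i ≠ 0 → 0 < w i := fun i hi hw => (h₀ i hi).lt_of_ne' hw
  rw [← sum_filter_of_ne fun i hi hw => hpos i hi (left_ne_zero_of_smul hw)]
  refine (convex_convexHull R s).sum_mem (fun i hi => h₀ i (mem_filter.1 hi).1) ?_
    fun i hi => subset_convexHull R s (hz i (mem_filter.1 hi).1 (mem_filter.1 hi).2)
  rwa [sum_filter_of_ne hpos]

section SignalingGame

variable {Ω S A : Type*} [Fintype Ω]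

def IsUniqueBestResponse (u : S → A → Ω → ℝ) (arg : (Ω → ℝ) → S → A) : Prop :=
  ∀ β ∈ stdSimplex ℝ Ω, ∀ (s : S) (a : A), a ≠ arg β s →
    (∑ ω, β ω * u s a ω) < (∑ ω, β ω * u s (arg β s) ω)

theorem IsUniqueBestResponse.eq_of_forall_le {u : S → A → Ω → ℝ} {arg : (Ω → ℝ) → S → A}
    (harg : IsUniqueBestResponse u arg) {β : Ω → ℝ} (hβ : β ∈ stdSimplex ℝ Ω) {s : S} {a : A}
    (hopt : ∀ a', (∑ ω, β ω * u s a' ω) ≤ (∑ ω, β ω * u s a ω)) :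
    a = arg β s := by
  by_contra h
  exact (hopt (arg β s)).not_gt (harg β hβ s a h)

def signalProb (μ : Ω → ℝ) (π : Ω → S → ℝ) (s : S) : ℝ := ∑ ω, μ ω * π ω s

theorem signalProb_nonneg {μ : Ω → ℝ} {π : Ω → S → ℝ} (hμ : ∀ ω, 0 ≤ μ ω)
    (hπ : ∀ ω s, 0 ≤ π ω s) (s : S) : 0 ≤ signalProb μ π s :=
  sum_nonneg fun ω _ => mul_nonneg (hμ ω) (hπ ω s)

variable [Fintype S]

theorem sum_signalProb {μ : Ω → ℝ} {π : Ω → S → ℝ} (hμ : ∑ ω, μ ω = 1)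
    (hπ : ∀ ω, ∑ s, π ω s = 1) : ∑ s, signalProb μ π s = 1 := by
  simp only [signalProb]
  rw [sum_comm]
  simp [← mul_sum, hπ, hμ]

variable [Fintype A] {v u : S → A → Ω → ℝ} {arg : (Ω → ℝ) → S → A}

theorem poolingGraph_subset_PBEGraph (harg : IsUniqueBestResponse u arg) (s : S) :
    poolingGraph v u arg s ⊆ PBEGraph v u := by
  classical
  rintro ⟨μ, z⟩ ⟨hμ, ⟨β, α, hβ, hβs, hrec, hsend⟩, hz⟩
  dsimp only at hμ hβs hsend hz
  have hαs : α s = arg μ s := hβs ▸ harg.eq_of_forall_le (hβ s) (hrec s)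
  refine ⟨hμ, fun _ => Pi.single s 1, β, α,
    ⟨fun _ => single_mem_stdSimplex ℝ s, hβ, ?_, hrec, ?_⟩, ?_⟩
  · intro t ht ω
    obtain rfl : t = s := by
      by_contra h
      simp [h] at ht
    simp [hβs, hμ.2]
  · intro ω hω t ht s'
    obtain rfl : t = s := by
      by_contra h
      simp [h] at ht
    exact hsend ω hω s'
  · simp [Pi.single_apply, hαs, hz]

variable {μ : Ω → ℝ} {π : Ω → S → ℝ} {β : S → Ω → ℝ} {α : S → A}

theorem IsPBE.signalProb_smul_belief (h : IsPBE v u μ π β α) (hμ : ∀ ω, 0 ≤ μ ω) (s : S) :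
    signalProb μ π s • β s = fun ω => μ ω * π ω s := by
  have hπ : ∀ ω s, 0 ≤ π ω s := fun ω => (h.1 ω).1
  rcases (signalProb_nonneg hμ hπ s).lt_or_eq with hs | hs
  · funext ω
    rw [Pi.smul_apply, h.2.2.1 s hs ω, smul_eq_mul]
    exact mul_div_cancel₀ _ hs.ne'
  · have hzero := (sum_eq_zero_iff_of_nonneg fun ω _ => mul_nonneg (hμ ω) (hπ ω s)).1 hs.symm
    funext ω
    simp [← hs, hzero ω (mem_univ ω)]

theorem IsPBE.mem_poolingGraph (h : IsPBE v u μ π β α)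
    (harg : IsUniqueBestResponse u arg) (hμ : ∀ ω, 0 ≤ μ ω) {s : S}
    (hs : 0 < signalProb μ π s) :
    (β s, ∑ ω, β s ω * v s (α s) ω) ∈ poolingGraph v u arg s := by
  have hjoint : ∀ ω, 0 < β s ω → 0 < μ ω * π ω s := fun ω hω => by
    rw [← congrFun (h.signalProb_smul_belief hμ s) ω]
    exact mul_pos hs hω
  obtain ⟨hπ, hβ, -, hrec, hsend⟩ := h
  refine ⟨hβ s, ⟨β, α, hβ, rfl, hrec, fun ω hω s' => ?_⟩, ?_⟩
  · exact hsend ω (pos_of_mul_pos_left (hjoint ω hω) ((hπ ω).1 s)) s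
      (pos_of_mul_pos_right (hjoint ω hω) (hμ ω)) s'
  · rw [← harg.eq_of_forall_le (hβ s) (hrec s)]

theorem IsPBE.sum_signalProb_smul (h : IsPBE v u μ π β α) (hμ : ∀ ω, 0 ≤ μ ω) :
    ∑ s, signalProb μ π s • ((β s, ∑ ω, β s ω * v s (α s) ω) : (Ω → ℝ) × ℝ) =
      (μ, ∑ ω, μ ω * ∑ s, π ω s * v s (α s) ω) := by
  have hjoint := h.signalProb_smul_belief hμ
  ext ω
  · simp only [Prod.fst_sum, Finset.sum_apply, Prod.smul_fst, hjoint]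
    rw [← mul_sum, (h.1 ω).2, mul_one]
  · simp only [Prod.snd_sum, Prod.smul_snd, smul_eq_mul, mul_sum]
    rw [sum_comm]
    refine sum_congr rfl fun ω _ => sum_congr rfl fun s _ => ?_
    rw [← mul_assoc, ← mul_assoc, ← congrFun (hjoint s) ω, Pi.smul_apply, smul_eq_mul]

theorem PBEGraph_subset_convexHull_poolingGraph (harg : IsUniqueBestResponse u arg) :
    PBEGraph v u ⊆ convexHull ℝ (⋃ s, poolingGraph v u arg s) := by
  rintro ⟨μ, z⟩ ⟨hμ, π, β, α, h, hz⟩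
  dsimp only at hμ hz
  rw [hz, ← h.sum_signalProb_smul hμ.1]
  exact sum_smul_mem_convexHull_of_pos
    (fun s _ => signalProb_nonneg hμ.1 (fun ω => (h.1 ω).1) s)
    (sum_signalProb hμ.2 fun ω => (h.1 ω).2)
    fun s _ hs => Set.mem_iUnion.2 ⟨s, h.mem_poolingGraph harg hμ.1 hs⟩

theorem convexHull_PBEGraph_eq (harg : IsUniqueBestResponse u arg) :
    convexHull ℝ (PBEGraph v u) = convexHull ℝ (⋃ s, poolingGraph v u arg s) :=
  le_antisymm
    (convexHull_min (PBEGraph_subset_convexHull_poolingGraph harg) (convex_convexHull ℝ _))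
    (convexHull_mono (Set.iUnion_subset (poolingGraph_subset_PBEGraph harg)))

end SignalingGame

theorem pre_persuasion_value_eq_concavification_of_pooling_graphs_general
    {Ω S A : Type*} [Fintype Ω] [Fintype S]
    [Fintype A]
    (v u : S → A → Ω → ℝ)
    (arg : (Ω → ℝ) → S → A)
    (harg : ∀ β ∈ stdSimplex ℝ Ω, ∀ (s : S) (a : A), a ≠ arg β s →
      (∑ ω, β ω * u s a ω) < (∑ ω, β ω * u s (arg β s) ω))
    (μ0 : Ω → ℝ) :
    sSup (Real.toEReal ''
        {z : ℝ | ((μ0, z) : (Ω → ℝ) × ℝ) ∈ convexHull ℝ (PBEGraph v u)}) =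
      sSup (Real.toEReal ''
        {z : ℝ | ((μ0, z) : (Ω → ℝ) × ℝ) ∈
          convexHull ℝ (⋃ s : S, poolingGraph v u arg s)}) := by
  rw [convexHull_PBEGraph_eq (v := v) harg]

/-- Assuming unique receiver best responses, the sender's
pre-persuasion value (the concave envelope of the PBE payoff graph) equals the
concave envelope of the pooling payoff graphs, with suprema in the extended reals. -/
theorem pre_persuasion_value_eq_concavification_of_pooling_graphs
    {Ω S A : Type*} [Fintype Ω] [Nonempty Ω] [Fintype S] [Nonempty S]
    [Fintype A] [Nonempty A]
    (v u : S → A → Ω → ℝ)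
    (arg : (Ω → ℝ) → S → A)
    (harg : ∀ β ∈ stdSimplex ℝ Ω, ∀ (s : S) (a : A), a ≠ arg β s →
      (∑ ω, β ω * u s a ω) < (∑ ω, β ω * u s (arg β s) ω))
    (μ0 : Ω → ℝ) (hμ0 : μ0 ∈ stdSimplex ℝ Ω) :
    sSup (Real.toEReal ''
        {z : ℝ | ((μ0, z) : (Ω → ℝ) × ℝ) ∈ convexHull ℝ (PBEGraph v u)}) =
      sSup (Real.toEReal ''
        {z : ℝ | ((μ0, z) : (Ω → ℝ) × ℝ) ∈
          convexHull ℝ (⋃ s : S, poolingGraph v u arg s)}) :=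
  pre_persuasion_value_eq_concavification_of_pooling_graphs_general v u arg harg μ0
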